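/- arXiv:2108.13289 — 2 statements merged into one kernel-verified Lean document; each statement's English description precedes it below -/
import Mathlib

section
/- With $\mathrm{Vol}(C_\alpha(n)) = \frac{2\pi^{p/2}}{p\Gamma(p/2)}(\chi^2_{1-\alpha,p}/n)^{p/2}|\widehat\Omega|^{1/2}$, $\widehat\Sigma$ positive definite, and $\widehat{\mathrm{M\text{-}ESS}} = n|\widehat\Sigma|^{1/p}/|\widehat\Omega|^{1/p}$, the inequality $\mathrm{Vol}(C_\alpha(n))^{1/p} \leq \epsilon|\widehat\Sigma|^{1/2p}$ holds if and only if $\widehat{\mathrm{M\text{-}ESS}} \geq \frac{2^{2/p}\pi}{(p\Gamma(p/2))^{2/p}}\cdot\frac{\chi^2_{1-\alpha,p}}{\epsilon^2}$. -/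
/-!
`Vol(C_α(n))` is `c_p (χ/n)^{p/2} |Ω̂|^{1/2}` with `c_p = 2π^{p/2}/(pΓ(p/2))` the volume of the
unit ball in `ℝ^p`. Raising the criterion `Vol^{1/p} ≤ ε |Σ̂|^{1/(2p)}` to the power `2` turns it
into `c_p^{2/p} (χ/n) |Ω̂|^{1/p} ≤ ε² |Σ̂|^{1/p}`, which is linear in `n` and in the determinant
factors, and `c_p^{2/p} = 2^{2/p} π / (pΓ(p/2))^{2/p}`.
-/

open Real

namespace StoppingRule

variable {q : ℝ}

lemma rpow_half_rpow_two_div {b : ℝ} (hb : 0 ≤ b) (hq : q ≠ 0) :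
    (b ^ (q / 2)) ^ (2 / q) = b := by
  rw [← rpow_mul hb, div_mul_div_cancel₀ two_ne_zero, div_self hq, rpow_one]

lemma rpow_inv_le_mul_rpow_iff_sq {x ε s : ℝ} (hx : 0 ≤ x) (hε : 0 < ε) (hs : 0 ≤ s)
    (hq : 0 < q) :
    x ^ q⁻¹ ≤ ε * s ^ (1 / (2 * q)) ↔ x ^ (2 / q) ≤ ε ^ 2 * s ^ q⁻¹ := by
  have hsq : ∀ {y : ℝ}, 0 ≤ y → (y ^ (1 / (2 * q))) ^ (2 : ℝ) = y ^ q⁻¹ := fun hy => by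
    rw [← rpow_mul hy]
    congr 1
    field_simp
  rw [← rpow_le_rpow_iff (by positivity) (by positivity) two_pos, ← rpow_mul hx,
    mul_rpow hε.le (by positivity), hsq hs, inv_mul_eq_div, rpow_two]

lemma unitBallConst_rpow_two_div {m : ℝ} (hm : 0 ≤ m) (hq : q ≠ 0) :
    (2 * π ^ (q / 2) / m) ^ (2 / q) = 2 ^ (2 / q) * π / m ^ (2 / q) := by
  rw [div_rpow (by positivity) hm, mul_rpow zero_le_two (by positivity),
    rpow_half_rpow_two_div pi_pos.le hq]

lemma mul_rpow_half_mul_sqrt_rpow_two_div {c t d : ℝ} (hc : 0 ≤ c) (ht : 0 ≤ t) (hd : 0 ≤ d)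
    (hq : q ≠ 0) :
    (c * t ^ (q / 2) * √d) ^ (2 / q) = c ^ (2 / q) * t * d ^ q⁻¹ := by
  rw [mul_rpow (by positivity) (sqrt_nonneg d), mul_rpow hc (by positivity),
    rpow_half_rpow_two_div ht hq, sqrt_eq_rpow, ← rpow_mul hd]
  congr 2
  field_simp

lemma mul_div_mul_le_iff_le_mul_div {a χ n e s o : ℝ} (hn : 0 < n) (he : 0 < e) (ho : 0 < o) :
    a * (χ / n) * o ≤ e * s ↔ a * (χ / e) ≤ n * s / o := by
  rw [le_div_iff₀ ho, mul_div_assoc', mul_div_assoc', div_mul_eq_mul_div, div_le_iff₀ hn,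
    div_mul_eq_mul_div, div_le_iff₀ he]
  constructor <;> intro h <;> linarith

end StoppingRule

open StoppingRule in
/-- Equivalence of the volume-based stopping criterion and the M-ESS threshold:
`Vol(C_α(n))^{1/p} ≤ ε |Σ̂|^{1/(2p)}` iff
`n |Σ̂|^{1/p}/|Ω̂|^{1/p} ≥ 2^{2/p} π / (p Γ(p/2))^{2/p} · χ²_{1−α,p}/ε²`. -/
theorem stopping_rule_ess_equivalence {p : ℕ} (hp : 1 ≤ p) {n : ℕ} (hn : 0 < n)
    (ε : ℝ) (hε : 0 < ε) (χ : ℝ) (hχ : 0 < χ)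
    (Ωh Sg : Matrix (Fin p) (Fin p) ℝ) (hΩ : Ωh.PosDef) (hS : Sg.PosDef)
    (Vol : ℝ)
    (hVol : Vol = 2 * Real.pi ^ ((p : ℝ) / 2) / (p * Real.Gamma ((p : ℝ) / 2)) *
      (χ / n) ^ ((p : ℝ) / 2) * Real.sqrt Ωh.det) :
    Vol ^ ((p : ℝ)⁻¹) ≤ ε * Sg.det ^ (1 / (2 * (p : ℝ))) ↔
      (2 : ℝ) ^ (2 / (p : ℝ)) * Real.pi / ((p * Real.Gamma ((p : ℝ) / 2)) ^ (2 / (p : ℝ)))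
          * (χ / ε ^ 2)
        ≤ (n : ℝ) * Sg.det ^ ((p : ℝ)⁻¹) / Ωh.det ^ ((p : ℝ)⁻¹) := by
  have hP : (0 : ℝ) < p := by exact_mod_cast hp
  have hpΓ : 0 ≤ (p : ℝ) * Gamma (p / 2) := (mul_pos hP (Gamma_pos_of_pos (half_pos hP))).le
  have hχn : 0 ≤ χ / n := by positivity
  subst hVol
  rw [rpow_inv_le_mul_rpow_iff_sq (by positivity) hε hS.det_pos.le hP,
    mul_rpow_half_mul_sqrt_rpow_two_div (by positivity) hχn hΩ.det_pos.le hP.ne',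
    unitBallConst_rpow_two_div hpΓ hP.ne']
  exact mul_div_mul_le_iff_le_mul_div (by exact_mod_cast hn) (by positivity)
    (rpow_pos_of_pos hΩ.det_pos _)
end

section
/- Suppose $T^*(\epsilon)$ is the stopping time of the relative-volume sequential stopping rule with $R_n \to R > 0$ a.s. and $\widehat\Omega_n \to \Omega \succ 0$ a.s. Then $\lim_{\epsilon\to 0}\epsilon\, T^*(\epsilon)^{1/2} = d_{\alpha,p}^{1/p}\,\frac{|\Omega|^{1/2p}}{R}$ almost surely, where $d_{\alpha,p} = \frac{2\pi^{p/2}}{p\Gamma(p/2)}(\chi^2_{1-\alpha,p})^{p/2}$. -/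
/-!
Write `g n` for the left-hand side of the stopping rule without the padding `ε R_n 𝟙(n < n*)`.
Since `√n g n → A := (d |Ω|^{1/2})^{1/p}` and `R_n → R`, the ratio `q n = √n g n / R_n` tends to
`A / R`. At the stopping time `T = T*(ε)` the rule holds while at `T - 1` it fails, which gives
`q T ≤ ε √T ≤ q (T - 1) + ε`; as `T*(ε) → ∞` when `ε → 0`, both bounds tend to `A / R`.
-/

open MeasureTheory ProbabilityTheory Filter
open scoped Topology Matrix

lemma Real.sqrt_add_one_le {x : ℝ} (hx : 0 ≤ x) : √(x + 1) ≤ √x + 1 := by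
  rw [Real.sqrt_le_iff]
  exact ⟨by positivity, by nlinarith [Real.sq_sqrt hx, Real.sqrt_nonneg x]⟩

lemma Real.sqrt_mul_mul_rpow_neg_half_mul_rpow_inv {a b x p : ℝ} (ha : 0 ≤ a) (hb : 0 ≤ b)
    (hx : 0 < x) (hp : p ≠ 0) : √x * (a * x ^ (-p / 2) * b) ^ p⁻¹ = (a * b) ^ p⁻¹ := by
  have hpow : (x ^ (-p / 2)) ^ p⁻¹ = x ^ (-(1 / 2 : ℝ)) := by
    rw [← Real.rpow_mul hx.le]
    congr 1
    field_simp
  rw [mul_right_comm, Real.mul_rpow (mul_nonneg ha hb) (Real.rpow_nonneg hx.le _), hpow,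
    Real.sqrt_eq_rpow, mul_left_comm, ← Real.rpow_add hx, add_neg_cancel, Real.rpow_zero,
    mul_one]

lemma tendsto_inv_sqrt_natCast_atTop_zero :
    Tendsto (fun n : ℕ => (√(n : ℝ))⁻¹) atTop (𝓝 0) :=
  tendsto_inv_atTop_zero.comp (Real.tendsto_sqrt_atTop.comp tendsto_natCast_atTop_atTop)

lemma tendsto_zero_of_tendsto_sqrt_mul {g : ℕ → ℝ} {A : ℝ}
    (h : Tendsto (fun n : ℕ => √(n : ℝ) * g n) atTop (𝓝 A)) : Tendsto g atTop (𝓝 0) := by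
  have hprod := h.mul tendsto_inv_sqrt_natCast_atTop_zero
  rw [mul_zero] at hprod
  refine hprod.congr' ?_
  filter_upwards [eventually_gt_atTop 0] with n hn
  have : √(n : ℝ) ≠ 0 := by positivity
  field_simp

lemma tendsto_sqrt_mul_rpow_inv_add_inv {d p D₀ : ℝ} {D : ℕ → ℝ} (hd : 0 ≤ d) (hp : 0 < p)
    (hD : Tendsto D atTop (𝓝 D₀)) :
    Tendsto (fun n : ℕ => √(n : ℝ) * ((d * (n : ℝ) ^ (-p / 2) * √(D n)) ^ p⁻¹ + (n : ℝ)⁻¹))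
      atTop (𝓝 ((d * √D₀) ^ p⁻¹)) := by
  have hlim := ((hD.sqrt.const_mul d).rpow_const (p := p⁻¹) (Or.inr (by positivity))).add
    tendsto_inv_sqrt_natCast_atTop_zero
  rw [add_zero] at hlim
  refine hlim.congr' ?_
  filter_upwards [eventually_gt_atTop 0] with n hn
  rw [mul_add, Real.sqrt_mul_mul_rpow_neg_half_mul_rpow_inv hd (Real.sqrt_nonneg _)
    (Nat.cast_pos.2 hn) hp.ne', ← div_eq_mul_inv, Real.sqrt_div_self', one_div]

/-- `0` when no index qualifies. -/
noncomputable def stoppingIndex (P : ℕ → Prop) (g R : ℕ → ℝ) (ε : ℝ) : ℕ :=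
  sInf {n | P n ∧ g n ≤ ε * R n}

section StoppingIndex

variable {P : ℕ → Prop} {g R : ℕ → ℝ} {L : ℝ}

lemma stoppingIndex_spec (hP : ∀ᶠ n in atTop, P n) (hg : Tendsto g atTop (𝓝 0))
    (hR : Tendsto R atTop (𝓝 L)) (hL : 0 < L) {ε : ℝ} (hε : 0 < ε) :
    P (stoppingIndex P g R ε) ∧ g (stoppingIndex P g R ε) ≤ ε * R (stoppingIndex P g R ε) := by
  obtain ⟨n, hPn, hlt⟩ := (hP.and (hg.eventually_lt (hR.const_mul ε) (mul_pos hε hL))).exists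
  exact Nat.sInf_mem (s := {n | P n ∧ g n ≤ ε * R n}) ⟨n, hPn, hlt.le⟩

lemma lt_of_lt_stoppingIndex {ε : ℝ} {m : ℕ} (hm : m < stoppingIndex P g R ε) (hPm : P m) :
    ε * R m < g m :=
  lt_of_not_ge fun h => Nat.notMem_of_lt_sInf hm ⟨hPm, h⟩

lemma tendsto_stoppingIndex_atTop (hP : ∀ᶠ n in atTop, P n) (hg_pos : ∀ n, P n → 0 < g n)
    (hg : Tendsto g atTop (𝓝 0)) (hR : Tendsto R atTop (𝓝 L)) (hL : 0 < L) :
    Tendsto (stoppingIndex P g R) (𝓝[>] 0) atTop := by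
  refine tendsto_atTop.2 fun K => ?_
  have hfails : ∀ n ∈ Finset.range K, ∀ᶠ ε in 𝓝[>] (0 : ℝ), P n → ε * R n < g n := by
    intro n _
    by_cases hPn : P n
    · have hlim : Tendsto (fun ε => ε * R n) (𝓝[>] (0 : ℝ)) (𝓝 0) := by
        simpa using (tendsto_id.mul_const (R n)).mono_left (nhdsWithin_le_nhds (a := (0 : ℝ)))
      filter_upwards [hlim.eventually_lt_const (hg_pos n hPn)] with ε h _ using h
    · exact Eventually.of_forall fun _ h => absurd h hPn
  filter_upwards [(eventually_all_finset _).2 hfails, self_mem_nhdsWithin] with ε hsmall hε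
  by_contra! hlt
  obtain ⟨hPτ, hτ⟩ := stoppingIndex_spec hP hg hR hL hε
  exact (hsmall _ (Finset.mem_range.2 hlt) hPτ).not_ge hτ

theorem tendsto_mul_sqrt_stoppingIndex {A : ℝ} (hP : ∀ᶠ n in atTop, P n)
    (hg_pos : ∀ n, P n → 0 < g n) (hA : Tendsto (fun n : ℕ => √(n : ℝ) * g n) atTop (𝓝 A))
    (hR : Tendsto R atTop (𝓝 L)) (hL : 0 < L) :
    Tendsto (fun ε => ε * √(stoppingIndex P g R ε : ℝ)) (𝓝[>] 0) (𝓝 (A / L)) := by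
  set τ := stoppingIndex P g R
  have hg := tendsto_zero_of_tendsto_sqrt_mul hA
  have hτ : Tendsto τ (𝓝[>] 0) atTop := tendsto_stoppingIndex_atTop hP hg_pos hg hR hL
  have hτ_pred : Tendsto (fun ε => τ ε - 1) (𝓝[>] 0) atTop := (tendsto_sub_atTop_nat 1).comp hτ
  set q : ℕ → ℝ := fun n => √(n : ℝ) * g n / R n
  have hq : Tendsto q atTop (𝓝 (A / L)) := hA.div hR hL.ne'
  have hgood : ∀ᶠ n in atTop, P n ∧ 0 < R n := hP.and (hR.eventually_const_lt hL)
  have hlower : ∀ᶠ ε in 𝓝[>] 0, q (τ ε) ≤ ε * √(τ ε : ℝ) := by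
    filter_upwards [hτ.eventually hgood, self_mem_nhdsWithin] with ε ⟨_, hRpos⟩ hε
    rw [div_le_iff₀ hRpos]
    nlinarith [(stoppingIndex_spec hP hg hR hL hε).2, Real.sqrt_nonneg (τ ε : ℝ)]
  have hupper : ∀ᶠ ε in 𝓝[>] 0, ε * √(τ ε : ℝ) ≤ q (τ ε - 1) + ε := by
    filter_upwards [hτ_pred.eventually hgood, hτ.eventually_ge_atTop 1, self_mem_nhdsWithin]
      with ε ⟨hPm, hRpos⟩ hτ1 hε
    have hε : (0 : ℝ) < ε := hε
    have hfail := lt_of_lt_stoppingIndex (Nat.sub_one_lt_of_lt hτ1) hPm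
    have hm : ε * √((τ ε - 1 : ℕ) : ℝ) ≤ q (τ ε - 1) := by
      rw [le_div_iff₀ hRpos]
      nlinarith [Real.sqrt_nonneg ((τ ε - 1 : ℕ) : ℝ)]
    have hsqrt : √(τ ε : ℝ) ≤ √((τ ε - 1 : ℕ) : ℝ) + 1 := by
      have hcast : (τ ε : ℝ) = ((τ ε - 1 : ℕ) : ℝ) + 1 := by
        rw [Nat.cast_sub hτ1, Nat.cast_one, sub_add_cancel]
      rw [hcast]
      exact Real.sqrt_add_one_le (Nat.cast_nonneg _)
    nlinarith
  refine tendsto_of_tendsto_of_tendsto_of_le_of_le' (hq.comp hτ) ?_ hlower hupper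
  simpa using (hq.comp hτ_pred).add (tendsto_nhdsWithin_of_tendsto_nhds tendsto_id)

end StoppingIndex

lemma padded_rule_iff {b ε r : ℝ} {n nstar : ℕ} (hb : 0 ≤ b) (hn : 0 < n) :
    b + (ε * r * (if n < nstar then 1 else 0) + (n : ℝ)⁻¹) ≤ ε * r ↔
      nstar ≤ n ∧ b + (n : ℝ)⁻¹ ≤ ε * r := by
  have hinv : (0 : ℝ) < (n : ℝ)⁻¹ := by positivity
  split_ifs with h
  · simp only [mul_one, not_le.2 h, false_and, iff_false]
    linarith
  · simp [not_lt.1 h]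

theorem stopping_time_asymptotics_general {p : ℕ} (hp : 1 ≤ p) (χ : ℝ) (hχ : 0 < χ)
    (d : ℝ)
    (hd : d = 2 * Real.pi ^ ((p : ℝ) / 2) / (p * Real.Gamma ((p : ℝ) / 2)) *
      χ ^ ((p : ℝ) / 2))
    {Ω : Type*} [MeasureSpace Ω]
    (Om : Matrix (Fin p) (Fin p) ℝ) (hOm : Om.PosDef)
    (Omn : ℕ → Ω → Matrix (Fin p) (Fin p) ℝ)
    (hOmn : ∀ᵐ ω ∂ℙ, ∀ i j, Tendsto (fun n => Omn n ω i j) atTop (𝓝 (Om i j)))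
    (R : ℕ → Ω → ℝ) (Rlim : ℝ) (hRlim : 0 < Rlim)
    (hR : ∀ᵐ ω ∂ℙ, Tendsto (fun n => R n ω) atTop (𝓝 Rlim))
    (nstar : ℕ)
    (s : ℝ → ℕ → Ω → ℝ)
    (hs : ∀ ε n ω, s ε n ω = ε * R n ω * (if n < nstar then 1 else 0) + ((n : ℝ))⁻¹)
    (T : ℝ → Ω → ℕ)
    (hT : ∀ ε ω, T ε ω = sInf {n : ℕ | 0 < n ∧
      (d * (n : ℝ) ^ (-(p : ℝ) / 2) * Real.sqrt (Omn n ω).det) ^ ((p : ℝ)⁻¹) + s ε n ω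
        ≤ ε * R n ω}) :
    ∀ᵐ ω ∂ℙ, Tendsto (fun ε => ε * Real.sqrt (T ε ω)) (𝓝[>] (0 : ℝ))
      (𝓝 (d ^ ((p : ℝ)⁻¹) * Om.det ^ (1 / (2 * (p : ℝ))) / Rlim)) := by
  have hd0 : 0 ≤ d := by rw [hd]; positivity
  filter_upwards [hOmn, hR] with ω hOmω hRω
  have hbase (n : ℕ) : 0 ≤ (d * (n : ℝ) ^ (-(p : ℝ) / 2) * √(Omn n ω).det) ^ (p : ℝ)⁻¹ := by
    positivity
  set g : ℕ → ℝ := fun n =>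
    (d * (n : ℝ) ^ (-(p : ℝ) / 2) * √(Omn n ω).det) ^ (p : ℝ)⁻¹ + (n : ℝ)⁻¹
  have hT_eq : ∀ ε, T ε ω = stoppingIndex (fun n => 0 < n ∧ nstar ≤ n) g (R · ω) ε := by
    intro ε
    rw [hT, stoppingIndex]
    congr 1
    ext n
    simp only [Set.mem_ofPred_eq, hs, and_assoc]
    exact and_congr_right fun hn => padded_rule_iff (hbase n) hn
  have hdet : Tendsto (fun n => (Omn n ω).det) atTop (𝓝 Om.det) :=
    (continuous_id.matrix_det.tendsto Om).comp
      (tendsto_pi_nhds.2 fun i => tendsto_pi_nhds.2 (hOmω i))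
  have hA : Tendsto (fun n : ℕ => √(n : ℝ) * g n) atTop (𝓝 ((d * √Om.det) ^ (p : ℝ)⁻¹)) :=
    tendsto_sqrt_mul_rpow_inv_add_inv hd0 (by positivity) hdet
  have hA_eq : (d * √Om.det) ^ (p : ℝ)⁻¹ = d ^ (p : ℝ)⁻¹ * Om.det ^ (1 / (2 * (p : ℝ))) := by
    rw [Real.mul_rpow hd0 (Real.sqrt_nonneg _), Real.sqrt_eq_rpow, ← Real.rpow_mul hOm.det_pos.le]
    congr 2
    field_simp
  simp_rw [hT_eq, ← hA_eq]
  exact tendsto_mul_sqrt_stoppingIndex ((eventually_gt_atTop 0).and (eventually_ge_atTop nstar))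
    (fun n hn => add_pos_of_nonneg_of_pos (hbase n) (inv_pos.2 (Nat.cast_pos.2 hn.1))) hA hRω hRlim

/-- Glynn–Whitt-type asymptotics for the relative-volume sequential stopping rule:
`ε T*(ε)^{1/2} → d_{α,p}^{1/p} |Ω|^{1/(2p)} / R` almost surely as `ε → 0⁺`. -/
theorem stopping_time_asymptotics {p : ℕ} (hp : 1 ≤ p) (χ : ℝ) (hχ : 0 < χ)
    (d : ℝ)
    (hd : d = 2 * Real.pi ^ ((p : ℝ) / 2) / (p * Real.Gamma ((p : ℝ) / 2)) *
      χ ^ ((p : ℝ) / 2))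
    {Ω : Type*} [MeasureSpace Ω] [IsProbabilityMeasure (ℙ : Measure Ω)]
    (Om : Matrix (Fin p) (Fin p) ℝ) (hOm : Om.PosDef)
    (Omn : ℕ → Ω → Matrix (Fin p) (Fin p) ℝ)
    (hOmn : ∀ᵐ ω ∂ℙ, ∀ i j, Tendsto (fun n => Omn n ω i j) atTop (𝓝 (Om i j)))
    (R : ℕ → Ω → ℝ) (Rlim : ℝ) (hRlim : 0 < Rlim)
    (hR : ∀ᵐ ω ∂ℙ, Tendsto (fun n => R n ω) atTop (𝓝 Rlim))
    (nstar : ℕ) (hnstar : 0 < nstar)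
    (s : ℝ → ℕ → Ω → ℝ)
    (hs : ∀ ε n ω, s ε n ω = ε * R n ω * (if n < nstar then 1 else 0) + ((n : ℝ))⁻¹)
    (T : ℝ → Ω → ℕ)
    (hT : ∀ ε ω, T ε ω = sInf {n : ℕ | 0 < n ∧
      (d * (n : ℝ) ^ (-(p : ℝ) / 2) * Real.sqrt (Omn n ω).det) ^ ((p : ℝ)⁻¹) + s ε n ω
        ≤ ε * R n ω}) :
    ∀ᵐ ω ∂ℙ, Tendsto (fun ε => ε * Real.sqrt (T ε ω)) (𝓝[>] (0 : ℝ))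
      (𝓝 (d ^ ((p : ℝ)⁻¹) * Om.det ^ (1 / (2 * (p : ℝ))) / Rlim)) :=
  stopping_time_asymptotics_general hp χ hχ d hd Om hOm Omn hOmn R Rlim hRlim hR nstar s hs T hT
end
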